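/- arXiv:1204.3502 — 2 statements merged into one kernel-verified Lean document; each statement's English description precedes it below -/
import Mathlib

section
/- For all complex z and real μ > -1, ρ ∈ ℂ, the Wright function W_{μ,ρ}(z) = Σ_{k=0}^∞ z^k / (k! · Γ(μk + ρ)) converges absolutely, i.e. the series Σ z^k/(k! Γ(μk+ρ)) is summable. -/
/-!
For `μ ≥ 0` the points `μ k + ρ` stay in the half-strip `Re s ≥ Re ρ`, `|Im s| ≤ |Im ρ|`, on which
`1 / Γ` is bounded: it is continuous on a compact rectangle, and `‖1 / Γ s‖ ≤ ‖1 / Γ (s - 1)‖` once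
`Re s ≥ 2` because `Γ s = (s - 1) Γ (s - 1)`. The series is then dominated by the exponential series.

For `-1 < μ < 0` Euler's reflection formula gives `‖1 / Γ s‖ ≤ C Γ (1 - Re s)`, so the terms are
dominated by `|z| ^ k Γ (c + b k) / k!` with `b = -μ ∈ (0, 1)`. Log-convexity of `Γ` gives
`Γ (x + b) ≤ x ^ b Γ x`, so consecutive terms of the majorant have ratio `O(k ^ (b - 1)) → 0`.
-/

open Filter Topology MeasureTheory Complex
open scoped Nat Real

theorem Complex.norm_sin_le_exp_abs_im (w : ℂ) : ‖sin w‖ ≤ Real.exp |w.im| := by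
  rw [sin, norm_div, norm_mul, norm_I, mul_one, Complex.norm_two]
  calc ‖exp (-w * I) - exp (w * I)‖ / 2
      ≤ (‖exp (-w * I)‖ + ‖exp (w * I)‖) / 2 := by gcongr; exact norm_sub_le _ _
    _ = (Real.exp w.im + Real.exp (-w.im)) / 2 := by simp [Complex.norm_exp]
    _ ≤ Real.exp |w.im| := by
      have := Real.exp_le_exp.2 (le_abs_self w.im)
      have := Real.exp_le_exp.2 (neg_le_abs w.im)
      linarith

theorem Complex.norm_Gamma_le_Gamma_re {s : ℂ} (hs : 0 < s.re) :
    ‖Gamma s‖ ≤ Real.Gamma s.re := by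
  rw [Gamma_eq_integral hs, Real.Gamma_eq_integral hs, GammaIntegral]
  refine (norm_integral_le_integral_norm _).trans_eq (setIntegral_congr_fun measurableSet_Ioi
    fun x (hx : 0 < x) => ?_)
  simp [norm_cpow_eq_rpow_re_of_pos hx, Complex.norm_exp]

theorem Complex.inv_Gamma_eq_Gamma_one_sub_mul_sin_div_pi {s : ℂ} (hs : s.re < 1) :
    (Gamma s)⁻¹ = Gamma (1 - s) * sin (π * s) / π := by
  have hΓ : Gamma (1 - s) ≠ 0 := Gamma_ne_zero_of_re_pos (by simpa using hs)
  rw [eq_div_of_mul_eq hΓ (Gamma_mul_Gamma_one_sub s), inv_div, div_div_eq_mul_div]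

theorem Complex.norm_inv_Gamma_le_of_re_lt_one {s : ℂ} (hs : s.re < 1) :
    ‖(Gamma s)⁻¹‖ ≤ Real.Gamma (1 - s.re) * (Real.exp (π * |s.im|) / π) := by
  rw [inv_Gamma_eq_Gamma_one_sub_mul_sin_div_pi hs, norm_div, norm_mul, mul_div_assoc]
  have hsin : ‖sin (π * s)‖ ≤ Real.exp (π * |s.im|) := by
    simpa [abs_mul, abs_of_pos Real.pi_pos] using norm_sin_le_exp_abs_im (π * s)
  have hΓ : ‖Gamma (1 - s)‖ ≤ Real.Gamma (1 - s.re) := by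
    simpa using norm_Gamma_le_Gamma_re (s := 1 - s) (by simpa using hs)
  rw [norm_real, Real.norm_of_nonneg Real.pi_pos.le]
  gcongr

theorem Complex.exists_norm_inv_Gamma_le_of_le_re_of_abs_im_le (a b : ℝ) :
    ∃ M, ∀ s : ℂ, a ≤ s.re → |s.im| ≤ b → ‖(Gamma s)⁻¹‖ ≤ M := by
  set a' := max a 1 + 1
  obtain ⟨M, hM⟩ := ((isCompact_Icc (a := a) (b := a')).reProdIm
    (isCompact_Icc (a := -b) (b := b))).exists_bound_of_continuousOn
    differentiable_one_div_Gamma.continuous.continuousOn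
  refine ⟨M, fun s ha hb => ?_⟩
  suffices ∀ n : ℕ, ∀ s : ℂ, a ≤ s.re → s.re ≤ a' + n → |s.im| ≤ b → ‖(Gamma s)⁻¹‖ ≤ M from
    this ⌈s.re⌉₊ s ha (by linarith [Nat.le_ceil s.re, le_max_right a 1]) hb
  intro n
  induction n with
  | zero =>
    intro s ha ha' hb
    exact hM s ⟨⟨ha, by simpa using ha'⟩, abs_le.1 hb⟩
  | succ n ih =>
    intro s ha ha' hb
    by_cases hs : s.re ≤ a' + n
    · exact ih s ha hs hb
    have h1 : 1 ≤ ‖s - 1‖ := by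
      refine le_trans ?_ (abs_re_le_norm _)
      rw [sub_re, one_re, abs_of_nonneg] <;> linarith [le_max_right a 1, le_max_left a 1]
    have hrec := one_div_Gamma_eq_self_mul_one_div_Gamma_add_one (s - 1)
    rw [sub_add_cancel] at hrec
    calc ‖(Gamma s)⁻¹‖ ≤ ‖s - 1‖ * ‖(Gamma s)⁻¹‖ := le_mul_of_one_le_left (norm_nonneg _) h1
      _ = ‖(Gamma (s - 1))⁻¹‖ := by rw [hrec, norm_mul]
      _ ≤ M := ih (s - 1) (by rw [sub_re, one_re]; linarith [le_max_left a 1])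
          (by rw [sub_re, one_re]; push_cast at ha'; linarith) (by simpa using hb)

theorem Real.Gamma_add_le_mul_rpow {x b : ℝ} (hx : 0 < x) (hb0 : 0 < b) (hb1 : b < 1) :
    Real.Gamma (x + b) ≤ Real.Gamma x * x ^ b := by
  have hΓ := Real.Gamma_pos_of_pos hx
  calc Real.Gamma (x + b) = Real.Gamma ((1 - b) * x + b * (x + 1)) := by ring_nf
    _ ≤ Real.Gamma x ^ (1 - b) * Real.Gamma (x + 1) ^ b :=
      Real.Gamma_mul_add_mul_le_rpow_Gamma_mul_rpow_Gamma hx (by linarith) (by linarith) hb0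
        (by ring)
    _ = Real.Gamma x * x ^ b := by
      rw [Real.Gamma_add_one hx.ne', Real.mul_rpow hx.le hΓ.le, mul_left_comm,
        ← Real.rpow_add hΓ, sub_add_cancel, Real.rpow_one, mul_comm]

theorem summable_pow_div_factorial_mul_Gamma {b : ℝ} (hb0 : 0 < b) (hb1 : b < 1) (c x : ℝ) :
    Summable fun k : ℕ => x ^ k / k ! * Real.Gamma (c + b * k) := by
  have hk : Tendsto (fun k : ℕ => (k : ℝ) + 1) atTop atTop :=
    tendsto_atTop_add_const_right _ 1 tendsto_natCast_atTop_atTop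
  have hsmall : Tendsto (fun k : ℕ => |x| * ((k : ℝ) + 1) ^ (b - 1)) atTop (𝓝 0) := by
    simpa using ((tendsto_rpow_neg_atTop (by linarith : 0 < 1 - b)).comp hk).const_mul |x|
  have hpos : ∀ᶠ k : ℕ in atTop, 0 < c + b * k :=
    tendsto_atTop_add_const_left _ c
      (tendsto_natCast_atTop_atTop.const_mul_atTop hb0) |>.eventually_gt_atTop 0
  have hle : ∀ᶠ k : ℕ in atTop, c + b * k ≤ k + 1 :=
    tendsto_natCast_atTop_atTop.eventually_ge_atTop ((c - 1) / (1 - b)) |>.mono fun k hk => by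
      rw [div_le_iff₀ (by linarith)] at hk; nlinarith
  refine summable_of_ratio_norm_eventually_le (r := 1 / 2) (by norm_num) ?_
  filter_upwards [hpos, hle, hsmall.eventually_le_const (by norm_num : (0 : ℝ) < 1 / 2)]
    with k hpos hle hsmall
  set y := c + b * k
  have hy : c + b * ((k + 1 : ℕ) : ℝ) = y + b := by push_cast; ring
  have hΓ := Real.Gamma_pos_of_pos hpos
  have hΓ' := Real.Gamma_pos_of_pos (by linarith : 0 < y + b)
  have hk1 : (0 : ℝ) < k + 1 := by positivity
  have hrpow : y ^ b ≤ ((k : ℝ) + 1) ^ (b - 1) * (k + 1) := by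
    rw [Real.rpow_sub_one hk1.ne', div_mul_cancel₀ _ hk1.ne']
    exact Real.rpow_le_rpow hpos.le hle hb0.le
  simp only [hy, norm_mul, norm_div, norm_pow, Real.norm_eq_abs, Nat.abs_cast, abs_of_pos hΓ,
    abs_of_pos hΓ', Nat.factorial_succ, pow_succ]
  push_cast
  calc |x| ^ k * |x| / ((k + 1) * k !) * Real.Gamma (y + b)
      ≤ |x| ^ k * |x| / ((k + 1) * k !) * (Real.Gamma y * (((k : ℝ) + 1) ^ (b - 1) * (k + 1))) := by
        gcongr
        exact (Real.Gamma_add_le_mul_rpow hpos hb0 hb1).trans (mul_le_mul_of_nonneg_left hrpow hΓ.le)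
    _ = (|x| * ((k : ℝ) + 1) ^ (b - 1)) * (|x| ^ k / k ! * Real.Gamma y) := by
        field_simp
    _ ≤ 1 / 2 * (|x| ^ k / k ! * Real.Gamma y) := by gcongr

theorem norm_pow_div_factorial_mul_Gamma (z s : ℂ) (k : ℕ) :
    ‖z ^ k / ((k ! : ℂ) * Gamma s)‖ = ‖z‖ ^ k / k ! * ‖(Gamma s)⁻¹‖ := by
  rw [← div_div, div_eq_mul_inv, norm_mul, norm_div, norm_pow, Complex.norm_natCast]

theorem wright_summable_of_nonneg {μ : ℝ} (hμ : 0 ≤ μ) (ρ z : ℂ) :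
    Summable fun k : ℕ => z ^ k / ((k ! : ℂ) * Gamma ((μ * k : ℝ) + ρ)) := by
  obtain ⟨M, hM⟩ := exists_norm_inv_Gamma_le_of_le_re_of_abs_im_le ρ.re |ρ.im|
  refine .of_norm_bounded ((Real.summable_pow_div_factorial ‖z‖).mul_right M) fun k => ?_
  rw [norm_pow_div_factorial_mul_Gamma]
  gcongr
  exact hM _ (by simp; positivity) (by simp)

theorem wright_summable_of_neg {μ : ℝ} (hμ : -1 < μ) (hμ0 : μ < 0) (ρ z : ℂ) :
    Summable fun k : ℕ => z ^ k / ((k ! : ℂ) * Gamma ((μ * k : ℝ) + ρ)) := by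
  have hsum := (summable_pow_div_factorial_mul_Gamma (b := -μ) (by linarith) (by linarith)
    (1 - ρ.re) ‖z‖).mul_right (Real.exp (π * |ρ.im|) / π)
  refine .of_norm_bounded_eventually_nat hsum ?_
  have hre : ∀ᶠ k : ℕ in atTop, μ * k + ρ.re < 1 :=
    tendsto_atBot_add_const_right _ ρ.re
      (tendsto_natCast_atTop_atTop.const_mul_atTop_of_neg hμ0) |>.eventually_lt_atBot 1
  filter_upwards [hre] with k hk
  rw [norm_pow_div_factorial_mul_Gamma, mul_assoc]
  gcongr
  refine (norm_inv_Gamma_le_of_re_lt_one (by simpa using hk)).trans_eq ?_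
  simp only [add_re, ofReal_re, add_im, ofReal_im, zero_add]
  ring_nf

/-- absolute convergence of the Wright series. -/
theorem wright_summable (μ : ℝ) (hμ : -1 < μ) (ρ : ℂ) (z : ℂ) :
    Summable (fun k : ℕ =>
      z ^ k / ((k.factorial : ℂ) * Complex.Gamma ((μ * k : ℝ) + ρ))) := by
  rcases le_or_gt 0 μ with hμ0 | hμ0
  · exact wright_summable_of_nonneg hμ0 ρ z
  · exact wright_summable_of_neg hμ hμ0 ρ z
end

section
/- For β ∈ (0,1), x ≥ 0, t > 0, the function u(x,t) = (sin βπ/π) · x^{β-1} t^β / (x^{2β} + 2 x^β t^β cos βπ + t^{2β}) is a probability density in x on (0,∞) for each fixed t > 0: u ≥ 0 and ∫_0^∞ u(x,t) dx = 1. -/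
/-!
Substituting `y = x ^ β` turns the integral into `sin (βπ) t^β / (βπ)` times the classical integral
`∫₀^∞ dy / (y² + 2 y r cos θ + r²) = θ / (r sin θ)` with `θ = βπ`, `r = t^β`; completing the square
gives an `arctan` primitive, and `arctan (cot θ) = π/2 - θ` produces the factor `θ`.
-/

open MeasureTheory Real Set

lemma Real.rpow_two_mul {x : ℝ} (hx : 0 ≤ x) (y : ℝ) : x ^ (2 * y) = (x ^ y) ^ 2 := by
  rw [mul_comm]
  exact_mod_cast rpow_mul_natCast hx y 2

lemma sq_add_two_mul_mul_cos_add_sq (a b θ : ℝ) :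
    a ^ 2 + 2 * a * b * cos θ + b ^ 2 = (a + b * cos θ) ^ 2 + (b * sin θ) ^ 2 := by
  linear_combination (-b ^ 2) * sin_sq_add_cos_sq θ

lemma integral_Ioi_inv_add_sq_add_sq (a : ℝ) {s : ℝ} (hs : 0 < s) :
    ∫ v in Ioi (0 : ℝ), ((v + a) ^ 2 + s ^ 2)⁻¹ = (π / 2 - arctan (a / s)) / s := by
  have hderiv (v : ℝ) :
      HasDerivAt (fun v ↦ arctan ((v + a) / s) / s) ((v + a) ^ 2 + s ^ 2)⁻¹ v := by
    refine ((((hasDerivAt_id v).add_const a).div_const s).arctan.div_const s).congr_deriv ?_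
    simp only [id]
    field_simp
    ring
  have hlim : Filter.Tendsto (fun v ↦ arctan ((v + a) / s) / s) Filter.atTop
      (nhds (π / 2 / s)) :=
    ((tendsto_arctan_atTop.mono_right nhdsWithin_le_nhds).comp
      ((Filter.tendsto_atTop_add_const_right _ a Filter.tendsto_id).atTop_div_const hs)).div_const s
  rw [integral_Ioi_of_hasDerivAt_of_nonneg' (fun v _ ↦ hderiv v) (fun v _ ↦ by positivity) hlim]
  simp only [zero_add]
  ring

lemma integral_Ioi_inv_sq_add_two_mul_mul_cos_add_sq {r θ : ℝ} (hr : 0 < r) (hθ : 0 < θ)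
    (hθπ : θ < π) :
    ∫ v in Ioi (0 : ℝ), (v ^ 2 + 2 * v * r * cos θ + r ^ 2)⁻¹ = θ / (r * sin θ) := by
  have hsin : 0 < sin θ := sin_pos_of_pos_of_lt_pi hθ hθπ
  have harctan : arctan (r * cos θ / (r * sin θ)) = π / 2 - θ := by
    rw [mul_div_mul_left _ _ hr.ne', ← inv_div, ← tan_eq_sin_div_cos, ← tan_pi_div_two_sub,
      arctan_tan (by linarith) (by linarith)]
  simp only [sq_add_two_mul_mul_cos_add_sq]
  rw [integral_Ioi_inv_add_sq_add_sq _ (by positivity), harctan]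
  ring

noncomputable def lampertiDensity (β t x : ℝ) : ℝ :=
  sin (β * π) / π *
    (x ^ (β - 1) * t ^ β / (x ^ (2 * β) + 2 * x ^ β * t ^ β * cos (β * π) + t ^ (2 * β)))

lemma lampertiDensity_eq {β t x : ℝ} (ht : 0 ≤ t) (hx : 0 ≤ x) :
    lampertiDensity β t x = sin (β * π) / π *
      (x ^ (β - 1) * t ^ β / ((x ^ β) ^ 2 + 2 * x ^ β * t ^ β * cos (β * π) + (t ^ β) ^ 2)) := by
  rw [lampertiDensity, rpow_two_mul hx, rpow_two_mul ht]

lemma lampertiDensity_nonneg {β t x : ℝ} (hβ : 0 ≤ β) (hβ1 : β ≤ 1) (ht : 0 ≤ t) (hx : 0 ≤ x) :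
    0 ≤ lampertiDensity β t x := by
  have hsin : 0 ≤ sin (β * π) :=
    sin_nonneg_of_nonneg_of_le_pi (by positivity) (by nlinarith [pi_pos])
  rw [lampertiDensity_eq ht hx, sq_add_two_mul_mul_cos_add_sq]
  positivity

lemma integral_lampertiDensity {β t : ℝ} (hβ : 0 < β) (hβ1 : β < 1) (ht : 0 < t) :
    ∫ x in Ioi (0 : ℝ), lampertiDensity β t x = 1 := by
  have hθπ : β * π < π := by nlinarith [pi_pos]
  have hsin : 0 < sin (β * π) := sin_pos_of_pos_of_lt_pi (by positivity) hθπ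
  have hT : 0 < t ^ β := rpow_pos_of_pos ht β
  set g : ℝ → ℝ := fun y ↦ (y ^ 2 + 2 * y * t ^ β * cos (β * π) + (t ^ β) ^ 2)⁻¹
  have hsubst : ∀ x ∈ Ioi (0 : ℝ), lampertiDensity β t x =
      sin (β * π) * t ^ β / (π * β) * ((|β| * x ^ (β - 1)) • g (x ^ β)) := by
    intro x hx
    rw [lampertiDensity_eq ht.le (le_of_lt hx), abs_of_pos hβ, smul_eq_mul]
    simp only [g]
    field_simp
  calc ∫ x in Ioi (0 : ℝ), lampertiDensity β t x
      = sin (β * π) * t ^ β / (π * β) * ∫ x in Ioi (0 : ℝ), (|β| * x ^ (β - 1)) • g (x ^ β) := by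
        rw [setIntegral_congr_fun measurableSet_Ioi hsubst, integral_const_mul]
    _ = sin (β * π) * t ^ β / (π * β) * ∫ y in Ioi (0 : ℝ), g y := by
        rw [integral_comp_rpow_Ioi g hβ.ne']
    _ = sin (β * π) * t ^ β / (π * β) * (β * π / (t ^ β * sin (β * π))) := by
        rw [integral_Ioi_inv_sq_add_two_mul_mul_cos_add_sq hT (by positivity) hθπ]
    _ = 1 := by
        field_simp

/-- the Lamperti law is a probability density. -/
theorem lamperti_density_prob (β t : ℝ) (hβ : 0 < β) (hβ1 : β < 1) (ht : 0 < t) :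
    (∀ x : ℝ, 0 ≤ x →
      0 ≤ (Real.sin (β * Real.pi) / Real.pi) *
        (x ^ (β - 1) * t ^ β / (x ^ (2 * β) + 2 * x ^ β * t ^ β * Real.cos (β * Real.pi) + t ^ (2 * β)))) ∧
    (∫ x in Set.Ioi (0:ℝ),
      (Real.sin (β * Real.pi) / Real.pi) *
        (x ^ (β - 1) * t ^ β / (x ^ (2 * β) + 2 * x ^ β * t ^ β * Real.cos (β * Real.pi) + t ^ (2 * β)))) = 1 :=
  ⟨fun _ hx ↦ lampertiDensity_nonneg hβ.le hβ1.le ht.le hx, integral_lampertiDensity hβ hβ1 ht⟩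
end
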